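/- Any polynomial-time c-approximation algorithm for makespan minimization on unrelated machines yields, via the threshold transformation (adding deviations to nominal times exactly for jobs with p̂_{ij} > T/Γ) combined with binary search, a (c+1)-approximation for robust makespan minimization under budgeted uncertainty. Formally: if T ≥ OPT of the robust instance, then the transformed classical instance has optimum at most T, and any schedule of classical makespan at most cT has robust makespan at most (c+1)T. -/

import Mathlib

/-!
Fix a machine with job set `X` and put `t = T / Γ`. Call a job *big* if `t < p̂_j`, so the
transformed load of the machine is `∑ p̄ + ∑_{big} p̂`.

If the robust load is at most `T = Γ t`, then so is `p̂_Γ(X)`, and there are at most `Γ` big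
jobs (any `Γ` of them already have deviation sum above `Γ t`), hence `∑_{big} p̂ ≤ p̂_Γ(X)` and the transformed
load is at most the robust one. Conversely, any set of at most `Γ` jobs splits into big jobs, whose
deviations are paid in the transformed load, and at most `Γ` small ones, of deviation sum at most
`Γ t = T`; so the robust load exceeds the transformed load by at most `T`.
-/

/-- Sum of the `Γ` largest deviations of jobs in `X` (all of them if `|X| ≤ Γ`),
expressed as the maximum of `∑_{j∈S} p̂_j` over subsets `S ⊆ X` with `|S| ≤ Γ`. -/
noncomputable def devGamma {J : Type*} (phat : J → ℝ) (Γ : ℕ) (X : Finset J) : ℝ :=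
  (X.powerset.filter (fun S => S.card ≤ Γ)).sup'
    ⟨∅, by simp⟩ (fun S => ∑ j ∈ S, phat j)

open Finset

section devGamma

variable {J : Type*} (phat : J → ℝ) (Γ : ℕ) (X : Finset J)

theorem devGamma_le_iff {b : ℝ} :
    devGamma phat Γ X ≤ b ↔ ∀ S ⊆ X, #S ≤ Γ → ∑ j ∈ S, phat j ≤ b := by
  refine (Finset.sup'_le_iff _ _).trans ?_
  simp only [mem_filter, mem_powerset, and_imp]

theorem sum_le_devGamma {S : Finset J} (hSX : S ⊆ X) (hS : #S ≤ Γ) :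
    ∑ j ∈ S, phat j ≤ devGamma phat Γ X :=
  (devGamma_le_iff phat Γ X).1 le_rfl S hSX hS

theorem card_filter_lt_le_of_devGamma_le {t : ℝ} (hΓ : 0 < Γ)
    (h : devGamma phat Γ X ≤ Γ * t) : #{j ∈ X | t < phat j} ≤ Γ := by
  by_contra! hbig
  obtain ⟨S, hSbig, hS⟩ := exists_subset_card_eq hbig.le
  have hSne : S.Nonempty := card_pos.1 (hS ▸ hΓ)
  have hlt : (Γ : ℝ) * t < ∑ j ∈ S, phat j := by
    calc (Γ : ℝ) * t = ∑ _j ∈ S, t := by rw [sum_const, hS, nsmul_eq_mul]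
      _ < ∑ j ∈ S, phat j :=
        sum_lt_sum_of_nonempty hSne fun j hj => (mem_filter.1 (hSbig hj)).2
  exact (h.trans_lt hlt).not_ge
    (sum_le_devGamma phat Γ X (hSbig.trans (filter_subset _ _)) hS.le)

theorem sum_filter_lt_le_devGamma {t : ℝ} (hΓ : 0 < Γ) (h : devGamma phat Γ X ≤ Γ * t) :
    ∑ j ∈ X with t < phat j, phat j ≤ devGamma phat Γ X :=
  sum_le_devGamma phat Γ X (filter_subset _ _)
    (card_filter_lt_le_of_devGamma_le phat Γ X hΓ h)

theorem devGamma_le_sum_filter_lt_add {t : ℝ} (hphat : ∀ j, 0 ≤ phat j) (ht : 0 ≤ t) :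
    devGamma phat Γ X ≤ ∑ j ∈ X with t < phat j, phat j + Γ * t := by
  refine (devGamma_le_iff phat Γ X).2 fun S hSX hS => ?_
  rw [← sum_filter_add_sum_filter_not S (fun j => t < phat j)]
  gcongr ?_ + ?_
  · exact sum_le_sum_of_subset_of_nonneg (filter_subset_filter _ hSX)
      fun j _ _ => hphat j
  · calc ∑ j ∈ S with ¬t < phat j, phat j
        ≤ #{j ∈ S | ¬t < phat j} • t :=
          sum_le_card_nsmul _ _ _ fun j hj => not_lt.1 (mem_filter.1 hj).2
      _ ≤ Γ * t := by
        rw [nsmul_eq_mul]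
        gcongr
        exact_mod_cast (card_filter_le _ _).trans hS

end devGamma

theorem sum_ite_add_eq_sum_add_sum_filter {J β : Type*} [AddCommMonoid β] (X : Finset J)
    (P : J → Prop) [DecidablePred P] (a b : J → β) :
    ∑ j ∈ X, (if P j then a j + b j else a j) = ∑ j ∈ X, a j + ∑ j ∈ X with P j, b j := by
  rw [sum_filter, ← sum_add_distrib]
  exact sum_congr rfl fun j _ => by split_ifs <;> simp

theorem stmt5_general {J M : Type*} [Fintype J] [Fintype M] [DecidableEq M]
    [Nonempty M]
    (pbar phat : M → J → ℝ)
    (hpbar : ∀ i j, 0 ≤ pbar i j) (hphat : ∀ i j, 0 ≤ phat i j)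
    (Γ : ℕ) (hΓ : 1 ≤ Γ) (T c : ℝ) (hT : 0 < T) :
    let p : M → J → ℝ := fun i j =>
      if T / (Γ : ℝ) < phat i j then pbar i j + phat i j else pbar i j
    let jobs : (J → M) → M → Finset J := fun σ i => Finset.univ.filter (fun j => σ j = i)
    let robustMakespan : (J → M) → ℝ := fun σ =>
      Finset.univ.sup' Finset.univ_nonempty
        (fun i => ∑ j ∈ jobs σ i, pbar i j + devGamma (phat i) Γ (jobs σ i))
    let classicalMakespan : (J → M) → ℝ := fun σ =>
      Finset.univ.sup' Finset.univ_nonempty (fun i => ∑ j ∈ jobs σ i, p i j)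
    ((∃ σ, robustMakespan σ ≤ T) → (∃ σ, classicalMakespan σ ≤ T)) ∧
    (∀ σ, classicalMakespan σ ≤ c * T → robustMakespan σ ≤ (c + 1) * T) := by
  intro p jobs robustMakespan classicalMakespan
  have hΓT : (Γ : ℝ) * (T / Γ) = T := mul_div_cancel₀ T (by positivity)
  have hload : ∀ σ i, ∑ j ∈ jobs σ i, p i j =
      ∑ j ∈ jobs σ i, pbar i j + ∑ j ∈ jobs σ i with T / Γ < phat i j, phat i j :=
    fun σ i => sum_ite_add_eq_sum_add_sum_filter _ _ _ _
  refine ⟨fun ⟨σ, hσ⟩ => ⟨σ, sup'_le _ _ fun i _ => ?_⟩,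
    fun σ hσ => sup'_le _ _ fun i _ => ?_⟩
  · have hi := (sup'_le_iff _ _).1 hσ i (mem_univ i)
    have hdev : devGamma (phat i) Γ (jobs σ i) ≤ Γ * (T / Γ) := by
      rw [hΓT]
      linarith [sum_nonneg fun j (_ : j ∈ jobs σ i) => hpbar i j]
    rw [hload]
    linarith [sum_filter_lt_le_devGamma (phat i) Γ (jobs σ i) hΓ hdev]
  · have hi := (sup'_le_iff _ _).1 hσ i (mem_univ i)
    rw [hload] at hi
    have hdev := devGamma_le_sum_filter_lt_add (phat i) Γ (jobs σ i) (hphat i)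
      (div_nonneg hT.le (Nat.cast_nonneg Γ))
    rw [hΓT] at hdev
    linarith

/-- Threshold transformation: set `p_{ij} = p̄_{ij} + p̂_{ij}` when
`p̂_{ij} > T/Γ` and `p_{ij} = p̄_{ij}` otherwise.  If `T ≥ OPT` of the robust instance,
the transformed classical instance has optimum at most `T`; and any schedule of classical
makespan at most `c·T` has robust makespan at most `(c+1)·T`.  (Hence a polynomial
`c`-approximation for `R||C_max` gives a `(c+1)`-approximation for `R|U^Γ|C_max`.) -/
theorem stmt5 {J M : Type*} [DecidableEq J] [Fintype J] [Fintype M] [DecidableEq M]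
    [Nonempty M]
    (pbar phat : M → J → ℝ)
    (hpbar : ∀ i j, 0 ≤ pbar i j) (hphat : ∀ i j, 0 ≤ phat i j)
    (Γ : ℕ) (hΓ : 1 ≤ Γ) (T c : ℝ) (hT : 0 < T) (hc : 1 ≤ c) :
    let p : M → J → ℝ := fun i j =>
      if T / (Γ : ℝ) < phat i j then pbar i j + phat i j else pbar i j
    let jobs : (J → M) → M → Finset J := fun σ i => Finset.univ.filter (fun j => σ j = i)
    let robustMakespan : (J → M) → ℝ := fun σ =>
      Finset.univ.sup' Finset.univ_nonempty
        (fun i => ∑ j ∈ jobs σ i, pbar i j + devGamma (phat i) Γ (jobs σ i))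
    let classicalMakespan : (J → M) → ℝ := fun σ =>
      Finset.univ.sup' Finset.univ_nonempty (fun i => ∑ j ∈ jobs σ i, p i j)
    ((∃ σ, robustMakespan σ ≤ T) → (∃ σ, classicalMakespan σ ≤ T)) ∧
    (∀ σ, classicalMakespan σ ≤ c * T → robustMakespan σ ≤ (c + 1) * T) :=
  stmt5_general pbar phat hpbar hphat Γ hΓ T c hT
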